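/- arXiv:1705.00349 — 6 statements merged into one kernel-verified Lean document; each statement's English description precedes it below -/
import Mathlib

section
/- Let A be the incidence matrix of size-b subsets of E, and let ρ ∈ [0,1]^{|E|} with ∑_e ρ_e = b. For every vector w ∈ ℝ^{|E|} such that ∑_{e ∈ T} w_e ≤ 0 for every size-b subset T of E, we have ∑_e w_e ρ_e ≤ 0. -/
/-!
Choose a `b`-subset `T` of maximal weight `∑_{e ∈ T} w e`. Exchanging one element shows that
`w` is at least some threshold `t` on `T` and at most `t` off `T`. Since `∑ ρ = #T`,
`∑_{e ∈ T} w e - ∑_e w e ρ e = ∑_e (w e - t) (𝟙_T e - ρ e)`, and every term is nonnegative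
because `0 ≤ ρ ≤ 1`. Hence `∑_e w e ρ e ≤ ∑_{e ∈ T} w e ≤ 0`.
-/

open Finset

section

variable {E : Type*}

theorem sum_mul_le_sum_of_threshold [Fintype E] {T : Finset E} {ρ w : E → ℝ} {t : ℝ}
    (h0 : ∀ e, 0 ≤ ρ e) (h1 : ∀ e, ρ e ≤ 1) (hsum : ∑ e, ρ e = #T)
    (hT : ∀ e ∈ T, t ≤ w e) (hTc : ∀ e ∉ T, w e ≤ t) :
    ∑ e, w e * ρ e ≤ ∑ e ∈ T, w e := by
  classical
  have hterm : ∀ e, 0 ≤ (w e - t) * ((if e ∈ T then 1 else 0) - ρ e) := by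
    intro e
    by_cases he : e ∈ T
    · simpa [he] using mul_nonneg (sub_nonneg.2 (hT e he)) (sub_nonneg.2 (h1 e))
    · simpa [he] using
        mul_nonneg_of_nonpos_of_nonpos (sub_nonpos.2 (hTc e he)) (neg_nonpos.2 (h0 e))
  have hid : ∑ e, (w e - t) * ((if e ∈ T then 1 else 0) - ρ e)
      = ∑ e ∈ T, w e - ∑ e, w e * ρ e := by
    simp only [mul_sub, sub_mul, sum_sub_distrib, mul_ite, mul_one, mul_zero, sum_ite_mem,
      univ_inter, ← mul_sum, hsum, sum_const, nsmul_eq_mul]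
    ring
  linarith [sum_nonneg fun e (_ : e ∈ univ) => hterm e]

theorem exists_threshold_of_forall_le [Fintype E] {T : Finset E} {w : E → ℝ}
    (h : ∀ e ∈ T, ∀ f ∉ T, w f ≤ w e) :
    ∃ t, (∀ e ∈ T, t ≤ w e) ∧ ∀ f ∉ T, w f ≤ t := by
  rcases T.eq_empty_or_nonempty with rfl | hT
  · obtain ⟨t, ht⟩ := (Set.finite_range w).bddAbove
    exact ⟨t, by simp, fun f _ => ht ⟨f, rfl⟩⟩
  · obtain ⟨e₀, he₀, hmin⟩ := T.exists_min_image w hT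
    exact ⟨w e₀, hmin, h e₀ he₀⟩

theorem le_of_forall_card_eq_sum_le {T : Finset E} {w : E → ℝ}
    (hmax : ∀ S : Finset E, #S = #T → ∑ e ∈ S, w e ≤ ∑ e ∈ T, w e) :
    ∀ e ∈ T, ∀ f ∉ T, w f ≤ w e := by
  classical
  intro e he f hf
  have hf' : f ∉ T.erase e := fun h => hf (mem_of_mem_erase h)
  have hcard : #(insert f (T.erase e)) = #T := by
    rw [card_insert_of_notMem hf', card_erase_add_one he]
  have := hmax _ hcard
  rw [sum_insert hf', sum_erase_eq_sub he] at this
  linarith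

theorem exists_card_eq_forall_card_eq_sum_le [Fintype E] (w : E → ℝ) {b : ℕ}
    (hb : b ≤ Fintype.card E) :
    ∃ T : Finset E, #T = b ∧ ∀ S : Finset E, #S = b → ∑ e ∈ S, w e ≤ ∑ e ∈ T, w e := by
  obtain ⟨T, hT, hmax⟩ := exists_max_image (powersetCard b univ) (fun S => ∑ e ∈ S, w e)
    (powersetCard_nonempty.2 (by simpa using hb))
  exact ⟨T, (mem_powersetCard.1 hT).2, fun S hS => hmax S (by simpa [mem_powersetCard] using hS)⟩

end

theorem farkas_certificate_general {E : Type*} [Fintype E] (b : ℕ)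
    (hbE : b ≤ Fintype.card E)
    (ρ : E → ℝ) (h0 : ∀ e, 0 ≤ ρ e) (h1 : ∀ e, ρ e ≤ 1)
    (hsum : ∑ e : E, ρ e = (b : ℝ))
    (w : E → ℝ) (hw : ∀ T : Finset E, T.card = b → ∑ e ∈ T, w e ≤ 0) :
    ∑ e : E, w e * ρ e ≤ 0 := by
  obtain ⟨T, rfl, hmax⟩ := exists_card_eq_forall_card_eq_sum_le w hbE
  obtain ⟨t, hT, hTc⟩ := exists_threshold_of_forall_le (le_of_forall_card_eq_sum_le hmax)
  calc ∑ e, w e * ρ e ≤ ∑ e ∈ T, w e := sum_mul_le_sum_of_threshold h0 h1 hsum hT hTc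
    _ ≤ 0 := hw T rfl

/-- Farkas-certificate inequality: if `w` sums to a nonpositive value over every
size-`b` subset of `E`, then `∑ w_e ρ_e ≤ 0` for any `ρ ∈ [0,1]^E` with total
mass `b`. -/
theorem farkas_certificate {E : Type*} [DecidableEq E] [Fintype E] (b : ℕ)
    (hb : 1 ≤ b) (hbE : b ≤ Fintype.card E)
    (ρ : E → ℝ) (h0 : ∀ e, 0 ≤ ρ e) (h1 : ∀ e, ρ e ≤ 1)
    (hsum : ∑ e : E, ρ e = (b : ℝ))
    (w : E → ℝ) (hw : ∀ T : Finset E, T.card = b → ∑ e ∈ T, w e ≤ 0) :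
    ∑ e : E, w e * ρ e ≤ 0 :=
  farkas_certificate_general b hbE ρ h0 h1 hsum w hw
end

section
/- Let S' = {i_1,...,i_n} be a minimal set cover, so that for each k there is a 'private' component e_k monitored only by i_k among the nodes of S'. Let σ¹ be any distribution over subsets of V whose support only uses nodes of S', with inspection probabilities ρ(i) = P_{σ¹}(i ∈ S), and suppose every positioning in the support has size at most b₁ < n. Then there exists an attack plan T of size b₂ ≤ n consisting of private components such that the expected number of detected attacks E_{σ¹}[F(S,T)] ≤ (b₂·b₁)/n, hence the defender's zero-sum payoff E_{σ¹}[F(S,T)] − b₂ ≤ b₂(b₁/n − 1). -/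
open Finset

/-- Against any inspection strategy supported on subsets of a minimal set cover of
size `n > b₁` (each positioning of size at most `b₁`), the attacker has an attack
plan of `b₂` private components whose expected number of detections is at most
`b₂ b₁ / n`, so the defender's zero-sum payoff is at most `b₂(b₁/n − 1)`. -/
theorem minimal_cover_attack {V E : Type*} [DecidableEq V] [DecidableEq E] [Fintype V]
    (C : V → Finset E) (n b₁ b₂ : ℕ)
    (f : Fin n → V) (hf : Function.Injective f)
    (g : Fin n → E)
    (hpriv : ∀ k : Fin n, g k ∈ C (f k))
    (hpriv' : ∀ j k : Fin n, j ≠ k → g k ∉ C (f j))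
    (hb1 : b₁ < n) (hb2 : 1 ≤ b₂) (hb2n : b₂ ≤ n)
    (σ : Finset V → ℝ) (hσ0 : ∀ S, 0 ≤ σ S) (hσ1 : ∑ S : Finset V, σ S = 1)
    (hsupp : ∀ S : Finset V, σ S ≠ 0 → S ⊆ Finset.univ.image f ∧ S.card ≤ b₁) :
    ∃ T : Finset E, T.card = b₂ ∧ T ⊆ Finset.univ.image g ∧
      (∑ S : Finset V, σ S * ((S.biUnion C ∩ T).card : ℝ)) ≤ (b₂ : ℝ) * b₁ / n ∧
      (∑ S : Finset V, σ S * ((S.biUnion C ∩ T).card : ℝ)) - (b₂ : ℝ) ≤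
        (b₂ : ℝ) * ((b₁ : ℝ) / n - 1) := by
  classical
  have hn : 0 < n := lt_of_le_of_lt (Nat.zero_le _) hb1
  have ginj : Function.Injective g := by
    intro j k h
    by_contra hjk
    exact hpriv' j k hjk (h ▸ hpriv j)
  set ρ : Fin n → ℝ := fun k => ∑ S : Finset V, σ S * (if f k ∈ S then (1:ℝ) else 0)
    with hρdef
  have hρ0 : ∀ k, 0 ≤ ρ k := fun k => Finset.sum_nonneg fun S _ =>
    mul_nonneg (hσ0 S) (by split <;> norm_num)
  -- total inspection probability is at most b₁
  have hR : ∑ k : Fin n, ρ k ≤ (b₁ : ℝ) := by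
    have h1 : ∑ k : Fin n, ρ k
        = ∑ S : Finset V, σ S * ((univ.filter fun k : Fin n => f k ∈ S).card : ℝ) := by
      rw [hρdef, Finset.sum_comm]
      refine Finset.sum_congr rfl fun S _ => ?_
      rw [← Finset.mul_sum, Finset.sum_boole]
    rw [h1]
    calc ∑ S : Finset V, σ S * ((univ.filter fun k : Fin n => f k ∈ S).card : ℝ)
        ≤ ∑ S : Finset V, σ S * (b₁ : ℝ) := by
          refine Finset.sum_le_sum fun S _ => ?_
          by_cases h : σ S = 0
          · simp [h]
          · refine mul_le_mul_of_nonneg_left ?_ (hσ0 S)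
            have hcard : (univ.filter fun k : Fin n => f k ∈ S).card ≤ S.card :=
              Finset.card_le_card_of_injOn f
                (fun k hk => (Finset.mem_filter.1 hk).2) (hf.injOn)
            exact_mod_cast hcard.trans (hsupp S h).2
      _ = (b₁ : ℝ) := by rw [← Finset.sum_mul, hσ1, one_mul]
  -- counting subsets containing a fixed element
  have hcount : ∀ k : Fin n,
      (((univ : Finset (Fin n)).powersetCard b₂).filter fun A => k ∈ A).card
        = (n-1).choose (b₂-1) := by
    intro k
    have hb : (((univ : Finset (Fin n)).powersetCard b₂).filter fun A => k ∈ A).card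
        = ((univ.erase k).powersetCard (b₂-1)).card := by
      refine Finset.card_bij' (fun A _ => A.erase k) (fun B _ => insert k B) ?_ ?_ ?_ ?_
      · intro A hA
        obtain ⟨hA1, hA2⟩ := Finset.mem_filter.1 hA
        obtain ⟨hsub, hcard⟩ := Finset.mem_powersetCard.1 hA1
        refine Finset.mem_powersetCard.2 ⟨Finset.erase_subset_erase k hsub, ?_⟩
        rw [Finset.card_erase_of_mem hA2, hcard]
      · intro B hB
        obtain ⟨hsub, hcard⟩ := Finset.mem_powersetCard.1 hB
        have hkB : k ∉ B := fun h => (Finset.mem_erase.1 (hsub h)).1 rfl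
        refine Finset.mem_filter.2 ⟨Finset.mem_powersetCard.2 ⟨Finset.subset_univ _, ?_⟩,
          Finset.mem_insert_self k B⟩
        rw [Finset.card_insert_of_notMem hkB, hcard]
        omega
      · intro A hA
        exact Finset.insert_erase (Finset.mem_filter.1 hA).2
      · intro B hB
        have hkB : k ∉ B := fun h =>
          (Finset.mem_erase.1 ((Finset.mem_powersetCard.1 hB).1 h)).1 rfl
        exact Finset.erase_insert hkB
    rw [hb, Finset.card_powersetCard, Finset.card_erase_of_mem (Finset.mem_univ k),
      Finset.card_univ, Fintype.card_fin]
  -- the double counting identity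
  have hswap : ∑ A ∈ (univ : Finset (Fin n)).powersetCard b₂, ∑ k ∈ A, ρ k
      = ((n-1).choose (b₂-1) : ℝ) * ∑ k : Fin n, ρ k := by
    have h1 : ∀ A ∈ (univ : Finset (Fin n)).powersetCard b₂,
        ∑ k ∈ A, ρ k = ∑ k : Fin n, if k ∈ A then ρ k else 0 := by
      intro A _
      rw [Finset.sum_ite_mem, Finset.univ_inter]
    rw [Finset.sum_congr rfl h1, Finset.sum_comm, Finset.mul_sum]
    refine Finset.sum_congr rfl fun k _ => ?_
    rw [← Finset.sum_filter, Finset.sum_const, hcount k, nsmul_eq_mul]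
  -- choose a good set of b₂ indices
  have hchoose : (n.choose b₂ : ℝ) * b₂ = ((n-1).choose (b₂-1) : ℝ) * n := by
    have h3 := Nat.add_one_mul_choose_eq (n-1) (b₂-1)
    have h1 : n - 1 + 1 = n := Nat.succ_pred_eq_of_pos hn
    have h2 : b₂ - 1 + 1 = b₂ := Nat.succ_pred_eq_of_pos hb2
    simp only [Nat.succ_eq_add_one, h1, h2] at h3
    have h4 : n.choose b₂ * b₂ = (n-1).choose (b₂-1) * n := by
      rw [← h3, Nat.mul_comm]
    exact_mod_cast h4
  obtain ⟨A, hA, hAle⟩ : ∃ A ∈ (univ : Finset (Fin n)).powersetCard b₂,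
      ∑ k ∈ A, ρ k ≤ (b₂ : ℝ) * b₁ / n := by
    refine Finset.exists_le_of_sum_le ?_ ?_
    · exact Finset.powersetCard_nonempty.2 (by simpa using hb2n)
    · rw [Finset.sum_const, Finset.card_powersetCard, Finset.card_univ, Fintype.card_fin,
        nsmul_eq_mul, hswap]
      have hc0 : (0:ℝ) ≤ ((n-1).choose (b₂-1) : ℝ) := Nat.cast_nonneg _
      have h4 : ((n-1).choose (b₂-1) : ℝ) * ∑ k : Fin n, ρ k
          ≤ ((n-1).choose (b₂-1) : ℝ) * b₁ := mul_le_mul_of_nonneg_left hR hc0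
      refine h4.trans (le_of_eq ?_)
      have hne : (n:ℝ) ≠ 0 := by positivity
      field_simp
      linear_combination -(b₁:ℝ) * hchoose
  obtain ⟨-, hAcard⟩ := Finset.mem_powersetCard.1 hA
  have hkey : ∀ S : Finset V, σ S ≠ 0 →
        ((S.biUnion C ∩ A.image g).card : ℝ)
          = ∑ k ∈ A, (if f k ∈ S then (1:ℝ) else 0) := by
      intro S hS
      have hsub := (hsupp S hS).1
      have heq : S.biUnion C ∩ A.image g = (A.filter fun k => f k ∈ S).image g := by
        ext e
        simp only [Finset.mem_inter, Finset.mem_biUnion, Finset.mem_image,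
          Finset.mem_filter]
        constructor
        · rintro ⟨⟨v, hvS, hev⟩, k, hkA, rfl⟩
          refine ⟨k, ⟨hkA, ?_⟩, rfl⟩
          obtain ⟨j, -, rfl⟩ := Finset.mem_image.1 (hsub hvS)
          by_cases hjk : j = k
          · exact hjk ▸ hvS
          · exact absurd hev (hpriv' j k hjk)
        · rintro ⟨k, ⟨hkA, hfk⟩, rfl⟩
          exact ⟨⟨f k, hfk, hpriv k⟩, k, hkA, rfl⟩
      rw [heq, Finset.card_image_of_injective _ ginj, Finset.sum_boole]
  have hsum : (∑ S : Finset V, σ S * ((S.biUnion C ∩ A.image g).card : ℝ))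
      = ∑ k ∈ A, ρ k := by
    calc ∑ S : Finset V, σ S * ((S.biUnion C ∩ A.image g).card : ℝ)
        = ∑ S : Finset V, ∑ k ∈ A, σ S * (if f k ∈ S then (1:ℝ) else 0) := by
          refine Finset.sum_congr rfl fun S _ => ?_
          by_cases h : σ S = 0
          · simp [h]
          · rw [hkey S h, Finset.mul_sum]
      _ = ∑ k ∈ A, ρ k := Finset.sum_comm
  refine ⟨A.image g, ?_, ?_, ?_, ?_⟩
  · rw [Finset.card_image_of_injective _ ginj, hAcard]
  · exact Finset.image_subset_image (Finset.subset_univ A)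
  · rw [hsum]; exact hAle
  · rw [hsum]
    have heq2 : (b₂ : ℝ) * ((b₁ : ℝ) / n - 1) = (b₂ : ℝ) * b₁ / n - b₂ := by ring
    rw [heq2]
    linarith
end

section
/- Let T' be a set packing of size m (i.e., |C_i ∩ T'| ≤ 1 for all i ∈ V), with m ≥ b₂ ≥ 1 and b₁ < m. Let σ² be the distribution that attacks each component of T' with marginal probability b₂/m (e.g., the uniform cyclic-window strategy). Then for every detector positioning S with |S| ≤ b₁, the expected number of undetected attacks satisfies E_{σ²}[|T| − F(S,T)] ≥ b₂(1 − b₁/m). -/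
/-!
Only the components of `T'` can be attacked, so the expected number of undetected attacks is the
total attack probability of the components of `T'` outside the monitored set `A = ⋃_{i ∈ S} C_i`,
namely `#(T' \ A) · b₂/m`. Since `T'` is a packing, each detector sees at most one component of
`T'`, so `#(A ∩ T') ≤ #S ≤ b₁` and `#(T' \ A) ≥ m - b₁`.
-/

open Finset

section

variable {E : Type*} [DecidableEq E]

theorem card_biUnion_inter_le_card_of_packing {V : Type*} (C : V → Finset E) (T' : Finset E)
    (hpack : ∀ i, #(C i ∩ T') ≤ 1) (S : Finset V) : #(S.biUnion C ∩ T') ≤ #S := by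
  rw [biUnion_inter]
  simpa using card_biUnion_le_card_mul S (fun i => C i ∩ T') 1 fun i _ => hpack i

theorem natCast_card_sub_card_inter_of_subset {R : Type*} [AddGroupWithOne R]
    {T T' : Finset E} (A : Finset E) (h : T ⊆ T') :
    (#T : R) - #(A ∩ T) = #((T' \ A) ∩ T) := by
  have hsdiff : (T' \ A) ∩ T = T \ A := by grind
  rw [sub_eq_iff_eq_add, hsdiff, ← Nat.cast_add, inter_comm,
    card_sdiff_add_card_inter]

variable [Fintype E]

theorem sum_mul_card_inter_eq_sum_sum_filter_mem {R : Type*} [NonAssocSemiring R]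
    (σ : Finset E → R) (U : Finset E) :
    ∑ T, σ T * #(U ∩ T) = ∑ e ∈ U, ∑ T with e ∈ T, σ T := by
  have hcard : ∀ T : Finset E, (#(U ∩ T) : R) = ∑ e ∈ U, if e ∈ T then 1 else 0 := by
    simp
  simp_rw [hcard, mul_sum, mul_boole]
  rw [sum_comm]
  simp_rw [sum_filter]

theorem sum_mul_card_sub_card_inter_eq_sum_sdiff {R : Type*} [NonAssocRing R]
    {σ : Finset E → R} {T' : Finset E} (hsupp : ∀ T, σ T ≠ 0 → T ⊆ T') (A : Finset E) :
    ∑ T, σ T * ((#T : R) - #(A ∩ T)) = ∑ e ∈ T' \ A, ∑ T with e ∈ T, σ T := by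
  rw [← sum_mul_card_inter_eq_sum_sum_filter_mem]
  refine sum_congr rfl fun T _ => ?_
  by_cases hT : σ T = 0
  · simp [hT]
  · rw [natCast_card_sub_card_inter_of_subset A (hsupp T hT)]

end

theorem packing_attack_guarantee_general {V E : Type*} [DecidableEq E] [Fintype E]
    (C : V → Finset E) (b₁ b₂ m : ℕ)
    (T' : Finset E) (hm : T'.card = m)
    (hpack : ∀ i : V, (C i ∩ T').card ≤ 1)
    (hb1 : b₁ < m)
    (σ : Finset E → ℝ)
    (hsupp : ∀ T : Finset E, σ T ≠ 0 → T ⊆ T')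
    (hmarg : ∀ e ∈ T',
      ∑ T ∈ Finset.univ.filter (fun T : Finset E => e ∈ T), σ T = (b₂ : ℝ) / m) :
    ∀ S : Finset V, S.card ≤ b₁ →
      (b₂ : ℝ) * (1 - (b₁ : ℝ) / m) ≤
        ∑ T : Finset E, σ T * ((T.card : ℝ) - ((S.biUnion C ∩ T).card : ℝ)) := by
  intro S hS
  have hm0 : (m : ℝ) ≠ 0 := Nat.cast_ne_zero.2 (by omega)
  rw [sum_mul_card_sub_card_inter_eq_sum_sdiff hsupp,
    sum_congr rfl fun e he => hmarg e (mem_sdiff.1 he).1, sum_const, nsmul_eq_mul]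
  have hunseen : (m : ℝ) - b₁ ≤ #(T' \ S.biUnion C) := by
    have hseen := card_biUnion_inter_le_card_of_packing C T' hpack S
    rw [← Nat.cast_sub hb1.le, Nat.cast_le, card_sdiff, hm]
    omega
  calc (b₂ : ℝ) * (1 - b₁ / m) = (m - b₁) * (b₂ / m) := by field_simp
    _ ≤ #(T' \ S.biUnion C) * (b₂ / m) := by gcongr

/-- If the attacker targets each component of a set packing `T'` of size `m` with
marginal probability `b₂/m`, then against any positioning of at most `b₁ < m`
detectors the expected number of undetected attacks is at least `b₂(1 − b₁/m)`. -/
theorem packing_attack_guarantee {V E : Type*} [DecidableEq V] [DecidableEq E] [Fintype E]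
    (C : V → Finset E) (b₁ b₂ m : ℕ)
    (T' : Finset E) (hm : T'.card = m)
    (hpack : ∀ i : V, (C i ∩ T').card ≤ 1)
    (hb2 : 1 ≤ b₂) (hb2m : b₂ ≤ m) (hb1 : b₁ < m)
    (σ : Finset E → ℝ) (hσ0 : ∀ T, 0 ≤ σ T) (hσ1 : ∑ T : Finset E, σ T = 1)
    (hsupp : ∀ T : Finset E, σ T ≠ 0 → T ⊆ T')
    (hmarg : ∀ e ∈ T',
      ∑ T ∈ Finset.univ.filter (fun T : Finset E => e ∈ T), σ T = (b₂ : ℝ) / m) :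
    ∀ S : Finset V, S.card ≤ b₁ →
      (b₂ : ℝ) * (1 - (b₁ : ℝ) / m) ≤
        ∑ T : Finset E, σ T * ((T.card : ℝ) - ((S.biUnion C ∩ T).card : ℝ)) :=
  packing_attack_guarantee_general C b₁ b₂ m T' hm hpack hb1 σ hsupp hmarg
end

section
/- Let T' = {e_1,...,e_m} be a set packing with m > b₁ ≥ 1, and suppose each component e_l is monitored by some node i_l (the i_l distinct since T' is a packing). Let σ² be any distribution over subsets of T' of size at most b₂, with attack probabilities ρ(e). Then placing detectors at S' = {i_1,...,i_{b₁}} (nodes monitoring the b₁ most-attacked components of T') yields expected undetected attacks E_{σ²}[|T|] − ∑_e F(S',{e})ρ(e) ≤ (1 − b₁/m)·E_{σ²}[|T|] ≤ b₂(1 − b₁/m). -/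
/-- Against any attack strategy supported on a set packing `{e_1,…,e_m}` (attack
plans of size at most `b₂`, components sorted by nonincreasing attack probability),
covering the `b₁` most-attacked components yields expected undetected attacks at
most `(1 − b₁/m)·E[|T|] ≤ b₂(1 − b₁/m)`. -/
theorem cover_top_attacked {V E : Type*} [DecidableEq V] [DecidableEq E] [Fintype E]
    (C : V → Finset E) (m b₁ b₂ : ℕ)
    (e : Fin m → E) (he : Function.Injective e)
    (hpack : ∀ v : V, (C v ∩ Finset.univ.image e).card ≤ 1)
    (i : Fin m → V) (hmon : ∀ l : Fin m, e l ∈ C (i l))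
    (hb1 : 1 ≤ b₁) (hb1m : b₁ < m)
    (σ : Finset E → ℝ) (hσ0 : ∀ T, 0 ≤ σ T) (hσ1 : ∑ T : Finset E, σ T = 1)
    (hsupp : ∀ T : Finset E, σ T ≠ 0 → T ⊆ Finset.univ.image e ∧ T.card ≤ b₂)
    (ρ : E → ℝ)
    (hρ : ∀ x : E, ρ x = ∑ T ∈ Finset.univ.filter (fun T : Finset E => x ∈ T), σ T)
    (hsorted : ∀ j k : Fin m, j ≤ k → ρ (e k) ≤ ρ (e j)) :
    (∑ T : Finset E, σ T * (T.card : ℝ)) -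
        ∑ x : E,
          (((((Finset.univ.filter (fun l : Fin m => (l : ℕ) < b₁)).image i).biUnion C
              ∩ ({x} : Finset E)).card : ℝ)) * ρ x ≤
      (1 - (b₁ : ℝ) / m) * (∑ T : Finset E, σ T * (T.card : ℝ)) ∧
    (1 - (b₁ : ℝ) / m) * (∑ T : Finset E, σ T * (T.card : ℝ)) ≤
      (b₂ : ℝ) * (1 - (b₁ : ℝ) / m) := by
  classical
  set F : Finset (Fin m) := Finset.univ.filter (fun l : Fin m => (l : ℕ) < b₁) with hF
  set S : Finset E := (F.image i).biUnion C with hSdef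
  set Etot : ℝ := ∑ T : Finset E, σ T * (T.card : ℝ) with hEdef
  have hm0 : (0:ℝ) < m := by
    have : 0 < m := lt_of_le_of_lt (Nat.zero_le b₁) hb1m
    exact_mod_cast this
  have hρnn : ∀ x, 0 ≤ ρ x := fun x => by
    rw [hρ]; exact Finset.sum_nonneg fun T _ => hσ0 T
  -- F has cardinality b₁
  have hFcard : F.card = b₁ := by
    have : F = Finset.Iio (⟨b₁, hb1m⟩ : Fin m) := by
      ext l; simp [hF, Fin.lt_def]
    rw [this, Fin.card_Iio]
  -- total expected attacks equals sum of ρ over all x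
  have hEtot : Etot = ∑ x : E, ρ x := by
    rw [hEdef]
    simp only [hρ, Finset.sum_filter]
    rw [Finset.sum_comm]
    refine Finset.sum_congr rfl fun T _ => ?_
    rw [Finset.sum_ite_mem, Finset.univ_inter, Finset.sum_const, nsmul_eq_mul, mul_comm]
  have hρ0 : ∀ x, x ∉ Finset.univ.image e → ρ x = 0 := by
    intro x hx
    rw [hρ]
    refine Finset.sum_eq_zero fun T hT => ?_
    by_contra h
    exact hx ((hsupp T h).1 (Finset.mem_filter.mp hT).2)
  have heinj : ∀ a ∈ (Finset.univ : Finset (Fin m)), ∀ b ∈ (Finset.univ : Finset (Fin m)),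
      e a = e b → a = b := fun a _ b _ h => he h
  have hEtot' : Etot = ∑ l : Fin m, ρ (e l) := by
    rw [hEtot, ← Finset.sum_image heinj]
    exact (Finset.sum_subset (Finset.subset_univ _) (fun x _ hx => hρ0 x hx)).symm
  -- detection sum dominates sum of ρ over the top-b₁ components
  set A : ℝ := ∑ l ∈ F, ρ (e l) with hAdef
  have hD : A ≤ ∑ x : E, ((S ∩ ({x} : Finset E)).card : ℝ) * ρ x := by
    refine le_trans ?_ (Finset.sum_le_sum_of_subset_of_nonneg
        (Finset.subset_univ (F.image e))
        (fun x _ _ => mul_nonneg (Nat.cast_nonneg _) (hρnn x)))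
    rw [Finset.sum_image (fun a _ b _ h => he h), hAdef]
    refine Finset.sum_le_sum fun l hl => ?_
    have hmem : e l ∈ S := Finset.mem_biUnion.mpr ⟨i l, Finset.mem_image_of_mem i hl, hmon l⟩
    have hinter : S ∩ ({e l} : Finset E) = {e l} :=
      Finset.inter_eq_right.mpr (by simp [hmem])
    rw [hinter, Finset.card_singleton]
    simp
  -- sorted partial sum inequality
  set R : ℝ := ∑ l ∈ Finset.univ.filter (fun l : Fin m => ¬ ((l : ℕ) < b₁)), ρ (e l) with hRdef
  set k : Fin m := ⟨b₁, hb1m⟩ with hk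
  have hA : (b₁ : ℝ) * ρ (e k) ≤ A := by
    calc (b₁ : ℝ) * ρ (e k) = ∑ _l ∈ F, ρ (e k) := by
          rw [Finset.sum_const, hFcard, nsmul_eq_mul]
      _ ≤ A := Finset.sum_le_sum fun l hl => hsorted l k
          (by have := (Finset.mem_filter.mp hl).2; exact Fin.le_def.mpr (Nat.le_of_lt this))
  have hRcard : (Finset.univ.filter (fun l : Fin m => ¬ ((l : ℕ) < b₁))).card = m - b₁ := by
    have h := Finset.card_filter_add_card_filter_not
      (s := (Finset.univ : Finset (Fin m))) (p := fun l : Fin m => (l : ℕ) < b₁)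
    rw [← hF, hFcard, Finset.card_univ, Fintype.card_fin] at h
    omega
  have hR : R ≤ ((m - b₁ : ℕ) : ℝ) * ρ (e k) := by
    calc R ≤ ∑ _l ∈ Finset.univ.filter (fun l : Fin m => ¬ ((l : ℕ) < b₁)), ρ (e k) :=
          Finset.sum_le_sum fun l hl => hsorted k l
            (by have := (Finset.mem_filter.mp hl).2; exact Fin.le_def.mpr (Nat.le_of_not_lt this))
      _ = ((m - b₁ : ℕ) : ℝ) * ρ (e k) := by
          rw [Finset.sum_const, hRcard, nsmul_eq_mul]
  have hsplit : Etot = A + R := by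
    rw [hEtot', hAdef, hRdef, hF]
    exact (Finset.sum_filter_add_sum_filter_not _ _ _).symm
  have hcast : ((m - b₁ : ℕ) : ℝ) = (m : ℝ) - (b₁ : ℝ) := by
    rw [Nat.cast_sub hb1m.le]
  have hbm : (b₁ : ℝ) < (m : ℝ) := by exact_mod_cast hb1m
  have hρk : 0 ≤ ρ (e k) := hρnn _
  have hq : (b₁ : ℝ) / m * Etot ≤ A := by
    rw [div_mul_eq_mul_div, div_le_iff₀ hm0, hsplit]
    have hR' : R ≤ ((m : ℝ) - b₁) * ρ (e k) := by rw [← hcast]; exact hR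
    have h1 : ((m : ℝ) - b₁) * ((b₁ : ℝ) * ρ (e k)) ≤ ((m : ℝ) - b₁) * A :=
      mul_le_mul_of_nonneg_left hA (by linarith)
    have h2 : (b₁ : ℝ) * R ≤ (b₁ : ℝ) * (((m : ℝ) - b₁) * ρ (e k)) :=
      mul_le_mul_of_nonneg_left hR' (by positivity)
    nlinarith [h1, h2]
  have hE2 : Etot ≤ (b₂ : ℝ) := by
    have : Etot ≤ ∑ T : Finset E, σ T * (b₂ : ℝ) := by
      refine Finset.sum_le_sum fun T _ => ?_
      by_cases h : σ T = 0
      · simp [h]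
      · exact mul_le_mul_of_nonneg_left (by exact_mod_cast (hsupp T h).2) (hσ0 T)
    calc Etot ≤ ∑ T : Finset E, σ T * (b₂ : ℝ) := this
      _ = (b₂ : ℝ) := by rw [← Finset.sum_mul, hσ1, one_mul]
  have hqle1 : (b₁ : ℝ) / m ≤ 1 := (div_le_one hm0).mpr hbm.le
  have hq0 : 0 ≤ (b₁ : ℝ) / m := by positivity
  constructor
  · have hD' : (b₁ : ℝ) / m * Etot ≤ ∑ x : E, ((S ∩ ({x} : Finset E)).card : ℝ) * ρ x :=
      le_trans hq hD
    nlinarith [hD']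
  · nlinarith [hE2, hqle1, hq0]
end

section
/- In the zero-sum matrix game where the defender chooses S with |S| ≤ b₁, the attacker chooses T with |T| ≤ b₂, and the attacker's payoff is |T| − F(S,T), if b₁ < n* (size of a minimum set cover) and b₂ ≤ m* (size of a maximum set packing), then the value v of the game (attacker's equilibrium payoff) satisfies max{0, b₂(1 − b₁/m*)} ≤ v ≤ b₂(1 − b₁/n*). -/
open Finset

/-- Attacker's expected payoff `U₂(σ¹,σ²) = E[|T| − F(S,T)]` in the network
inspection game. -/
noncomputable def attackerPayoff {V E : Type*} [DecidableEq V] [DecidableEq E]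
    [Fintype V] [Fintype E] (C : V → Finset E)
    (σ1 : Finset V → ℝ) (σ2 : Finset E → ℝ) : ℝ :=
  ∑ S : Finset V, ∑ T : Finset E,
    σ1 S * σ2 T * ((T.card : ℝ) - ((S.biUnion C ∩ T).card : ℝ))

/-- A mixed strategy over the subsets of a finite type, with support restricted
to subsets of size at most `b`. -/
def IsMixed {α : Type*} [Fintype α] [DecidableEq α] (b : ℕ) (σ : Finset α → ℝ) : Prop :=
  (∀ A, 0 ≤ σ A) ∧ (∑ A : Finset α, σ A = 1) ∧ (∀ A, σ A ≠ 0 → A.card ≤ b)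

/-!
Each player secures a bound by playing uniformly over the subsets of the right size of an
extremal structure. If the defender inspects a uniformly random `b₁`-subset of a minimum cover,
every edge is monitored by a cover vertex that is inspected with probability `b₁ / n*`, so the
attacker's payoff is at most `|T| (1 - b₁ / n*)`. If the attacker attacks a uniformly random
`b₂`-subset of a maximum packing, each packing edge is attacked with probability `b₂ / m*`, and
since a vertex monitors at most one packing edge, `b₁` inspections catch at most `b₁ b₂ / m*`
attacked edges on average. Attacking nothing secures `0`. At an equilibrium neither player gains
by deviating to these strategies.
-/

open scoped BigOperators

namespace Finset

variable {α β : Type*} [DecidableEq α]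

theorem card_mul_card_filter_mem_powersetCard {A : Finset α} {a : α} (ha : a ∈ A) (b : ℕ) :
    #A * #{B ∈ A.powersetCard b | a ∈ B} = b * #(A.powersetCard b) := by
  have hnot : {B ∈ A.powersetCard b | a ∉ B} = (A.erase a).powersetCard b := by
    ext B
    simp only [mem_filter, mem_powersetCard, subset_erase]
    tauto
  have hsplit := card_filter_add_card_filter_not (s := A.powersetCard b) (p := (a ∈ ·))
  obtain ⟨m, hm⟩ : ∃ m, #A = m + 1 := Nat.exists_eq_add_one.2 (card_pos.2 ⟨a, ha⟩)
  rw [hnot, card_powersetCard, card_powersetCard, card_erase_of_mem ha, hm,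
    Nat.add_sub_cancel] at hsplit
  rw [card_powersetCard, hm]
  cases b with
  | zero => simp_all
  | succ k =>
    rw [Nat.choose_succ_succ'] at hsplit
    rw [show #{B ∈ A.powersetCard (k + 1) | a ∈ B} = m.choose k by omega,
      Nat.add_one_mul_choose_eq, mul_comm]

theorem expect_powersetCard_ite_mem {A : Finset α} {a : α} (ha : a ∈ A) {b : ℕ}
    (hb : b ≤ #A) :
    𝔼 B ∈ A.powersetCard b, (if a ∈ B then 1 else 0 : ℝ) = b / #A := by
  have hA : (#A : ℝ) ≠ 0 := by exact_mod_cast (card_pos.2 ⟨a, ha⟩).ne'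
  have hP : (#(A.powersetCard b) : ℝ) ≠ 0 := by
    exact_mod_cast (powersetCard_nonempty.2 hb).card_pos.ne'
  rw [expect_eq_sum_div_card, sum_boole, div_eq_div_iff hP hA, mul_comm]
  exact_mod_cast card_mul_card_filter_mem_powersetCard ha b

theorem expect_powersetCard_card_filter {A : Finset α} {Y : Finset β} {g : β → α}
    (hg : ∀ e ∈ Y, g e ∈ A) {b : ℕ} (hb : b ≤ #A) :
    𝔼 B ∈ A.powersetCard b, (#{e ∈ Y | g e ∈ B} : ℝ) = #Y * (b / #A) := by
  simp_rw [natCast_card_filter]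
  rw [expect_sum_comm, sum_congr rfl fun e he => expect_powersetCard_ite_mem (hg e he) hb,
    sum_const, nsmul_eq_mul]

theorem card_biUnion_inter_le_card {ι : Type*} [DecidableEq β] {C : ι → Finset β}
    {T : Finset β} (hT : ∀ i, #(C i ∩ T) ≤ 1) (S : Finset ι) : #(S.biUnion C ∩ T) ≤ #S := by
  rw [biUnion_inter]
  exact card_biUnion_le.trans (card_eq_sum_ones S ▸ sum_le_sum fun i _ => hT i)

end Finset

section MixedStrategy

variable {α : Type*} [Fintype α] [DecidableEq α]

noncomputable def uniformStrategy (P : Finset (Finset α)) (A : Finset α) : ℝ :=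
  if A ∈ P then (#P : ℝ)⁻¹ else 0

theorem sum_uniformStrategy_mul (P : Finset (Finset α)) (f : Finset α → ℝ) :
    ∑ A, uniformStrategy P A * f A = 𝔼 A ∈ P, f A := by
  simp only [uniformStrategy, ite_mul, zero_mul, sum_ite_mem, univ_inter,
    expect_eq_sum_div_card, div_eq_inv_mul, mul_sum]

theorem isMixed_uniformStrategy {P : Finset (Finset α)} (hP : P.Nonempty) {b : ℕ}
    (hb : ∀ A ∈ P, #A ≤ b) : IsMixed b (uniformStrategy P) := by
  refine ⟨fun A => by unfold uniformStrategy; split_ifs <;> positivity, ?_, fun A hA => ?_⟩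
  · simpa [expect_const hP] using sum_uniformStrategy_mul P 1
  · by_contra hA'
    exact hA (if_neg fun hmem => hA' (hb A hmem))

theorem isMixed_uniformStrategy_powersetCard {A : Finset α} {b : ℕ} (hb : b ≤ #A) :
    IsMixed b (uniformStrategy (A.powersetCard b)) :=
  isMixed_uniformStrategy (powersetCard_nonempty.2 hb) fun _ hB => (mem_powersetCard.1 hB).2.le

theorem IsMixed.sum_mul_le {b : ℕ} {σ : Finset α → ℝ} (hσ : IsMixed b σ) {f : Finset α → ℝ}
    {c : ℝ} (hf : ∀ A, #A ≤ b → f A ≤ c) : ∑ A, σ A * f A ≤ c := by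
  obtain ⟨hnonneg, hsum, hsupp⟩ := hσ
  calc ∑ A, σ A * f A ≤ ∑ A, σ A * c := sum_le_sum fun A _ => by
        by_cases h : σ A = 0
        · simp [h]
        · exact mul_le_mul_of_nonneg_left (hf A (hsupp A h)) (hnonneg A)
    _ = c := by rw [← sum_mul, hsum, one_mul]

theorem IsMixed.le_sum_mul {b : ℕ} {σ : Finset α → ℝ} (hσ : IsMixed b σ) {f : Finset α → ℝ}
    {c : ℝ} (hf : ∀ A, #A ≤ b → c ≤ f A) : c ≤ ∑ A, σ A * f A := by
  have := hσ.sum_mul_le (f := -f) (c := -c) fun A hA => neg_le_neg (hf A hA)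
  simp only [Pi.neg_apply, mul_neg, sum_neg_distrib] at this
  linarith

end MixedStrategy

section Game

variable {V E : Type*} [DecidableEq E] (C : V → Finset E)

def purePayoff (S : Finset V) (T : Finset E) : ℝ := #T - #(S.biUnion C ∩ T)

theorem le_expect_purePayoff_powersetCard_of_packing {Tmax : Finset E}
    (hpack : ∀ i, #(C i ∩ Tmax) ≤ 1) {b₁ b₂ : ℕ} (hb₂ : b₂ ≤ #Tmax) {S : Finset V}
    (hS : #S ≤ b₁) :
    b₂ * (1 - b₁ / #Tmax) ≤ 𝔼 T ∈ Tmax.powersetCard b₂, purePayoff C S T := by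
  set X := S.biUnion C
  have hX : (#(X ∩ Tmax) : ℝ) ≤ b₁ := by
    exact_mod_cast (card_biUnion_inter_le_card hpack S).trans hS
  have hinter : ∀ T ∈ Tmax.powersetCard b₂,
      purePayoff C S T = b₂ - #{e ∈ X ∩ Tmax | e ∈ T} := fun T hT => by
    obtain ⟨hTsub, hTcard⟩ := mem_powersetCard.1 hT
    rw [purePayoff, hTcard, filter_mem_eq_inter, inter_assoc, inter_eq_right.2 hTsub]
  rw [expect_congr rfl hinter, expect_sub_distrib, expect_const (powersetCard_nonempty.2 hb₂),
    expect_powersetCard_card_filter (fun e he => (mem_inter.1 he).2) hb₂]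
  have := mul_le_mul_of_nonneg_right hX (by positivity : 0 ≤ (b₂ : ℝ) / #Tmax)
  linarith [show (b₂ : ℝ) * (1 - b₁ / #Tmax) = b₂ - b₁ * (b₂ / #Tmax) by ring]

variable [DecidableEq V]

theorem expect_purePayoff_powersetCard_le_of_cover {Smin : Finset V}
    (hcover : ∀ e, ∃ i ∈ Smin, e ∈ C i) {b₁ : ℕ} (hb₁ : b₁ ≤ #Smin) (T : Finset E) :
    𝔼 S ∈ Smin.powersetCard b₁, purePayoff C S T ≤ #T * (1 - b₁ / #Smin) := by
  choose f hfS hfC using hcover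
  have hcovered (S : Finset V) : (#{e ∈ T | f e ∈ S} : ℝ) ≤ #(S.biUnion C ∩ T) := by
    gcongr
    intro e he
    rw [mem_filter] at he
    exact mem_inter.2 ⟨mem_biUnion.2 ⟨f e, he.2, hfC e⟩, he.1⟩
  calc 𝔼 S ∈ Smin.powersetCard b₁, purePayoff C S T
      ≤ 𝔼 S ∈ Smin.powersetCard b₁, ((#T : ℝ) - #{e ∈ T | f e ∈ S}) := by
        gcongr with S
        exact sub_le_sub_left (hcovered S) _
    _ = #T * (1 - b₁ / #Smin) := by
        rw [expect_sub_distrib, expect_const (powersetCard_nonempty.2 hb₁),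
          expect_powersetCard_card_filter (fun e _ => hfS e) hb₁]
        ring

variable [Fintype V] [Fintype E]

theorem attackerPayoff_eq_sum_attack (σ1 : Finset V → ℝ) (σ2 : Finset E → ℝ) :
    attackerPayoff C σ1 σ2 = ∑ T, σ2 T * ∑ S, σ1 S * purePayoff C S T := by
  simp only [attackerPayoff, purePayoff, mul_sum]
  rw [sum_comm]
  exact sum_congr rfl fun T _ => sum_congr rfl fun S _ => by ring

theorem attackerPayoff_eq_sum_inspection (σ1 : Finset V → ℝ) (σ2 : Finset E → ℝ) :
    attackerPayoff C σ1 σ2 = ∑ S, σ1 S * ∑ T, σ2 T * purePayoff C S T := by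
  simp only [attackerPayoff, purePayoff, mul_sum]
  exact sum_congr rfl fun S _ => sum_congr rfl fun T _ => by ring

theorem attackerPayoff_uniformStrategy_le {b₂ : ℕ} {σ2 : Finset E → ℝ} (hσ2 : IsMixed b₂ σ2)
    (P : Finset (Finset V)) {c : ℝ} (hc : ∀ T, #T ≤ b₂ → 𝔼 S ∈ P, purePayoff C S T ≤ c) :
    attackerPayoff C (uniformStrategy P) σ2 ≤ c := by
  simp only [attackerPayoff_eq_sum_attack, sum_uniformStrategy_mul]
  exact hσ2.sum_mul_le hc

theorem le_attackerPayoff_uniformStrategy {b₁ : ℕ} {σ1 : Finset V → ℝ} (hσ1 : IsMixed b₁ σ1)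
    (P : Finset (Finset E)) {c : ℝ} (hc : ∀ S, #S ≤ b₁ → c ≤ 𝔼 T ∈ P, purePayoff C S T) :
    c ≤ attackerPayoff C σ1 (uniformStrategy P) := by
  simp only [attackerPayoff_eq_sum_inspection, sum_uniformStrategy_mul]
  exact hσ1.le_sum_mul hc

end Game

theorem equilibrium_value_bounds_general {V E : Type*} [DecidableEq V] [DecidableEq E]
    [Fintype V] [Fintype E] (C : V → Finset E) (b₁ b₂ nstar mstar : ℕ)
    (Smin : Finset V) (hScover : ∀ e : E, ∃ i ∈ Smin, e ∈ C i)
    (hScard : Smin.card = nstar)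
    (Tmax : Finset E) (hTpack : ∀ i : V, (C i ∩ Tmax).card ≤ 1)
    (hTcard : Tmax.card = mstar)
    (hb1 : b₁ < nstar) (hb2 : b₂ ≤ mstar)
    (σ1 : Finset V → ℝ) (σ2 : Finset E → ℝ)
    (h1 : IsMixed b₁ σ1) (h2 : IsMixed b₂ σ2)
    (hNE1 : ∀ τ1 : Finset V → ℝ, IsMixed b₁ τ1 →
      attackerPayoff C σ1 σ2 ≤ attackerPayoff C τ1 σ2)
    (hNE2 : ∀ τ2 : Finset E → ℝ, IsMixed b₂ τ2 →
      attackerPayoff C σ1 τ2 ≤ attackerPayoff C σ1 σ2) :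
    max 0 ((b₂ : ℝ) * (1 - (b₁ : ℝ) / mstar)) ≤ attackerPayoff C σ1 σ2 ∧
      attackerPayoff C σ1 σ2 ≤ (b₂ : ℝ) * (1 - (b₁ : ℝ) / nstar) := by
  subst hScard hTcard
  have hzero : 0 ≤ attackerPayoff C σ1 σ2 :=
    (le_attackerPayoff_uniformStrategy C h1 {∅} fun S _ => by simp [purePayoff]).trans
      (hNE2 _ (isMixed_uniformStrategy (singleton_nonempty ∅) (by simp)))
  have hlow : (b₂ : ℝ) * (1 - b₁ / #Tmax) ≤ attackerPayoff C σ1 σ2 :=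
    (le_attackerPayoff_uniformStrategy C h1 _ fun _ hS =>
      le_expect_purePayoff_powersetCard_of_packing C hTpack hb2 hS).trans
      (hNE2 _ (isMixed_uniformStrategy_powersetCard hb2))
  have hupp : attackerPayoff C σ1 σ2 ≤ b₂ * (1 - b₁ / #Smin) := by
    refine (hNE1 _ (isMixed_uniformStrategy_powersetCard hb1.le)).trans
      (attackerPayoff_uniformStrategy_le C h2 _ fun T hT => ?_)
    have hfrac : 0 ≤ 1 - (b₁ : ℝ) / #Smin :=
      sub_nonneg.2 (div_le_one_of_le₀ (by exact_mod_cast hb1.le) (Nat.cast_nonneg _))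
    calc _ ≤ (#T : ℝ) * (1 - b₁ / #Smin) :=
          expect_purePayoff_powersetCard_le_of_cover C hScover hb1.le T
      _ ≤ b₂ * (1 - b₁ / #Smin) := by gcongr
  exact ⟨max_le hzero hlow, hupp⟩

/-- Bounds on the value of the zero-sum inspection game: at any Nash equilibrium,
when `b₁ < n*` and `b₂ ≤ m*`, the attacker's equilibrium payoff `v` satisfies
`max{0, b₂(1 − b₁/m*)} ≤ v ≤ b₂(1 − b₁/n*)`. -/
theorem equilibrium_value_bounds {V E : Type*} [DecidableEq V] [DecidableEq E]
    [Fintype V] [Fintype E] (C : V → Finset E) (b₁ b₂ nstar mstar : ℕ)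
    (hmon : ∀ e : E, ∃ i : V, e ∈ C i)
    (Smin : Finset V) (hScover : ∀ e : E, ∃ i ∈ Smin, e ∈ C i)
    (hScard : Smin.card = nstar)
    (hSmin : ∀ S : Finset V, (∀ e : E, ∃ i ∈ S, e ∈ C i) → nstar ≤ S.card)
    (Tmax : Finset E) (hTpack : ∀ i : V, (C i ∩ Tmax).card ≤ 1)
    (hTcard : Tmax.card = mstar)
    (hTmax : ∀ T : Finset E, (∀ i : V, (C i ∩ T).card ≤ 1) → T.card ≤ mstar)
    (hb1 : b₁ < nstar) (hb2a : 1 ≤ b₂) (hb2 : b₂ ≤ mstar)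
    (σ1 : Finset V → ℝ) (σ2 : Finset E → ℝ)
    (h1 : IsMixed b₁ σ1) (h2 : IsMixed b₂ σ2)
    (hNE1 : ∀ τ1 : Finset V → ℝ, IsMixed b₁ τ1 →
      attackerPayoff C σ1 σ2 ≤ attackerPayoff C τ1 σ2)
    (hNE2 : ∀ τ2 : Finset E → ℝ, IsMixed b₂ τ2 →
      attackerPayoff C σ1 τ2 ≤ attackerPayoff C σ1 σ2) :
    max 0 ((b₂ : ℝ) * (1 - (b₁ : ℝ) / mstar)) ≤ attackerPayoff C σ1 σ2 ∧
      attackerPayoff C σ1 σ2 ≤ (b₂ : ℝ) * (1 - (b₁ : ℝ) / nstar) :=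
  equilibrium_value_bounds_general C b₁ b₂ nstar mstar Smin hScover hScard Tmax hTpack hTcard hb1
    hb2 σ1 σ2 h1 h2 hNE1 hNE2
end

section
/- Let S_min be a minimum set cover of size n* and let σ¹ be the uniform distribution over the n* cyclic b₁-windows of S_min, with b₁ < n*. Then for every attack plan T (nonempty subset of E), the expected detection rate satisfies E_{σ¹}[F(S,T)]/|T| ≥ b₁/n*, and this bound is attained for some single-component attack. -/
section Aux

variable {V E : Type*} [DecidableEq V] [DecidableEq E]

private lemma msc_ginj (n b₁ : ℕ) [NeZero n] (hb1 : b₁ < n) (k₀ : ZMod n) :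
    Set.InjOn (fun t : ℕ => k₀ - (t : ZMod n)) (Finset.range b₁) := by
  intro a ha b hb h
  simp only [Finset.coe_range, Set.mem_Iio] at ha hb
  have h2 : (a : ZMod n) = b := sub_right_injective h
  have := congrArg ZMod.val h2
  rwa [ZMod.val_cast_of_lt (ha.trans hb1), ZMod.val_cast_of_lt (hb.trans hb1)] at this

end Aux

/-- The uniform cyclic-window inspection strategy over a minimum set cover of size
`n` with `b₁ < n` detectors guarantees an expected detection rate of at least
`b₁/n` against every attack plan, and this bound is attained for some
single-component attack. -/
theorem msc_strategy_detection_rate {V E : Type*} [DecidableEq V] [DecidableEq E]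
    (C : V → Finset E) (n b₁ : ℕ) [NeZero n]
    (f : ZMod n → V) (hf : Function.Injective f)
    (hcover : ∀ e : E, ∃ k : ZMod n, e ∈ C (f k))
    (hmin : ∀ S : Finset V, (∀ e : E, ∃ i ∈ S, e ∈ C i) → n ≤ S.card)
    (hb1 : b₁ < n) :
    (∀ T : Finset E, T.Nonempty →
      (b₁ : ℝ) / n ≤
        (∑ k : ZMod n, (1 / n : ℝ) *
          (((((Finset.range b₁).image (fun t : ℕ => f (k + (t : ZMod n)))).biUnion C
              ∩ T).card : ℝ))) / (T.card : ℝ)) ∧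
    ∃ e : E,
      ∑ k : ZMod n, (1 / n : ℝ) *
          (((((Finset.range b₁).image (fun t : ℕ => f (k + (t : ZMod n)))).biUnion C
              ∩ ({e} : Finset E)).card : ℝ)) = (b₁ : ℝ) / n := by
  classical
  have hn : 0 < n := Nat.pos_of_ne_zero (NeZero.ne n)
  set W : ZMod n → Finset E := fun k =>
    ((Finset.range b₁).image (fun t : ℕ => f (k + (t : ZMod n)))).biUnion C with hWdef
  have hmemW : ∀ (e : E) (k : ZMod n),
      e ∈ W k ↔ ∃ t : ℕ, t < b₁ ∧ e ∈ C (f (k + (t : ZMod n))) := by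
    intro e k
    simp only [hWdef, Finset.mem_biUnion, Finset.mem_image, Finset.mem_range]
    constructor
    · rintro ⟨v, ⟨t, ht, rfl⟩, he⟩; exact ⟨t, ht, he⟩
    · rintro ⟨t, ht, he⟩; exact ⟨f (k + t), ⟨t, ht, rfl⟩, he⟩
  -- lower bound on number of detecting windows per element
  have hlb : ∀ e : E, b₁ ≤ (Finset.univ.filter (fun k => e ∈ W k)).card := by
    intro e
    obtain ⟨k₀, hk₀⟩ := hcover e
    have hsub : (Finset.range b₁).image (fun t : ℕ => k₀ - (t : ZMod n)) ⊆
        Finset.univ.filter (fun k => e ∈ W k) := by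
      intro k hk
      simp only [Finset.mem_image, Finset.mem_range] at hk
      obtain ⟨t, ht, rfl⟩ := hk
      refine Finset.mem_filter.mpr ⟨Finset.mem_univ _, (hmemW e _).mpr ⟨t, ht, ?_⟩⟩
      rwa [sub_add_cancel]
    calc b₁ = ((Finset.range b₁).image (fun t : ℕ => k₀ - (t : ZMod n))).card := by
          rw [Finset.card_image_of_injOn (msc_ginj n b₁ hb1 k₀), Finset.card_range]
      _ ≤ _ := Finset.card_le_card hsub
  -- double counting
  have hdc : ∀ T : Finset E, ∑ k : ZMod n, (W k ∩ T).card
      = ∑ e ∈ T, (Finset.univ.filter (fun k => e ∈ W k)).card := by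
    intro T
    have h1 : ∀ k : ZMod n, (W k ∩ T).card = ∑ e ∈ T, if e ∈ W k then 1 else 0 := by
      intro k
      rw [Finset.inter_comm, ← Finset.filter_mem_eq_inter, Finset.card_filter]
    have h2 : ∀ e : E, (Finset.univ.filter (fun k => e ∈ W k)).card
        = ∑ k : ZMod n, if e ∈ W k then 1 else 0 := by
      intro e; rw [Finset.card_filter]
    simp only [h1, h2]
    exact Finset.sum_comm
  constructor
  · intro T hT
    have hTc : (0 : ℝ) < T.card := by exact_mod_cast hT.card_pos
    have hnR : (0 : ℝ) < n := by exact_mod_cast hn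
    have hx : (b₁ : ℝ) * T.card ≤ ∑ k : ZMod n, ((W k ∩ T).card : ℝ) := by
      have hnat : b₁ * T.card ≤ ∑ k : ZMod n, (W k ∩ T).card := by
        rw [hdc T]
        calc b₁ * T.card = ∑ _e ∈ T, b₁ := by rw [Finset.sum_const, smul_eq_mul, mul_comm]
          _ ≤ _ := Finset.sum_le_sum (fun e _ => hlb e)
      exact_mod_cast hnat
    have hA : (∑ k : ZMod n, (1 / n : ℝ) * ((W k ∩ T).card : ℝ))
        = (∑ k : ZMod n, ((W k ∩ T).card : ℝ)) / n := by
      rw [← Finset.mul_sum]; ring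
    rw [hA, div_div, div_le_div_iff₀ hnR (by positivity)]
    nlinarith [hx, hnR.le]
  · -- existence of an element covered by exactly one window start
    have hex : ∃ e : E, ∃ k₀ : ZMod n, e ∈ C (f k₀) ∧ ∀ k, e ∈ C (f k) → k = k₀ := by
      by_contra hcon
      push_neg at hcon
      set S := (Finset.univ.image f).erase (f 0) with hSdef
      have hScov : ∀ e : E, ∃ i ∈ S, e ∈ C i := by
        intro e
        obtain ⟨k, hk⟩ := hcover e
        by_cases hk0 : k = 0
        · subst hk0
          obtain ⟨k', hk', hne⟩ := hcon e 0 hk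
          refine ⟨f k', ?_, hk'⟩
          exact Finset.mem_erase.mpr ⟨fun h => hne (hf h), Finset.mem_image_of_mem f (Finset.mem_univ _)⟩
        · exact ⟨f k, Finset.mem_erase.mpr ⟨fun h => hk0 (hf h),
            Finset.mem_image_of_mem f (Finset.mem_univ _)⟩, hk⟩
      have hcard : S.card = n - 1 := by
        rw [hSdef, Finset.card_erase_of_mem (Finset.mem_image_of_mem f (Finset.mem_univ _)),
          Finset.card_image_of_injective _ hf, Finset.card_univ, ZMod.card]
      have := hmin S hScov
      omega
    obtain ⟨e, k₀, hk₀, huniq⟩ := hex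
    refine ⟨e, ?_⟩
    have hfilter : Finset.univ.filter (fun k => e ∈ W k)
        = (Finset.range b₁).image (fun t : ℕ => k₀ - (t : ZMod n)) := by
      ext k
      simp only [Finset.mem_filter, Finset.mem_univ, true_and, Finset.mem_image,
        Finset.mem_range, hmemW]
      constructor
      · rintro ⟨t, ht, he⟩
        have : k + (t : ZMod n) = k₀ := huniq _ he
        exact ⟨t, ht, by rw [← this]; ring⟩
      · rintro ⟨t, ht, rfl⟩
        exact ⟨t, ht, by rwa [sub_add_cancel]⟩
    have hcardf : (Finset.univ.filter (fun k => e ∈ W k)).card = b₁ := by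
      rw [hfilter, Finset.card_image_of_injOn (msc_ginj n b₁ hb1 k₀), Finset.card_range]
    have hsingle : ∀ k : ZMod n, ((W k ∩ ({e} : Finset E)).card : ℝ)
        = if e ∈ W k then 1 else 0 := by
      intro k
      by_cases h : e ∈ W k
      · rw [if_pos h]
        norm_cast
        rw [Finset.inter_comm, Finset.singleton_inter_of_mem h, Finset.card_singleton]
      · rw [if_neg h]
        norm_cast
        rw [Finset.inter_comm, Finset.singleton_inter_of_notMem h, Finset.card_empty]
    calc ∑ k : ZMod n, (1 / n : ℝ) * ((W k ∩ ({e} : Finset E)).card : ℝ)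
        = (1 / n : ℝ) * ∑ k : ZMod n, ((W k ∩ ({e} : Finset E)).card : ℝ) := by
          rw [Finset.mul_sum]
      _ = (1 / n : ℝ) * ∑ k : ZMod n, (if e ∈ W k then (1:ℝ) else 0) := by
          simp only [hsingle]
      _ = (1 / n : ℝ) * ((Finset.univ.filter (fun k => e ∈ W k)).card : ℝ) := by
          rw [Finset.sum_boole]
      _ = (b₁ : ℝ) / n := by rw [hcardf]; ring
end
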